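/- (Uniqueness in the critical case, normalized form) For R = [[1, -1],[1, 1]], the Skorokhod problem has at most one solution for every continuous driving function f with f(0) ≥ 0: if (g, m) and (ḡ, m̄) are both solutions, then g = ḡ and m = m̄. -/

import Mathlib

/-!
Write `α = m₀ - m̄₀` and `β = m₁ - m̄₁`. Since `g - ḡ = R (m - m̄)`, at a time where `g₀`
vanishes we have `α - β = g₀ - ḡ₀ ≤ 0`, and where `g₁` vanishes, `α + β ≤ 0`. As `m₀` is
constant while `g₀ > 0` and `m̄₀` is non-decreasing, `α` can only rise while `g₀ = 0`; hence if
`α > w ≥ 0` at time `r`, then already `α > w` at some earlier time where `g₀ = 0`, so that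
there `β ≥ α > w`. In the same way `β` passes back to `-α`, and, exchanging the two solutions,
`-α` to `-β` and `-β` to `α`. Going around this cycle gives a non-increasing sequence of
times along which `α, β, -α, -β, α, …` stay above `w`; at its limit `α ≥ w` and `-α ≥ w`,
impossible for `w > 0`. Hence `α = β = 0`.
-/

open Set Matrix

/-- The Skorokhod problem on `[0,∞)` in the nonnegative quadrant of `ℝ²` with
reflection matrix `R` and driving function `f`: `(g, m)` is a solution. -/
def IsSkorokhod (R : Matrix (Fin 2) (Fin 2) ℝ) (f g m : ℝ → Fin 2 → ℝ) : Prop :=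
  ContinuousOn g (Set.Ici 0) ∧ ContinuousOn m (Set.Ici 0) ∧
  (∀ t ∈ Set.Ici (0:ℝ), ∀ j, 0 ≤ g t j) ∧
  m 0 = 0 ∧
  (∀ j, MonotoneOn (fun t => m t j) (Set.Ici 0)) ∧
  (∀ t ∈ Set.Ici (0:ℝ), g t = f t + R.mulVec (m t)) ∧
  (∀ j, ∀ s t, 0 ≤ s → s ≤ t → (∀ r ∈ Set.Icc s t, 0 < g r j) → m s j = m t j)

/-- Uniqueness of solutions of the Skorokhod problem with matrix `R`, for every
continuous driving function `f` with `f 0 ≥ 0`. -/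
def SkorokhodUnique (R : Matrix (Fin 2) (Fin 2) ℝ) : Prop :=
  ∀ f : ℝ → Fin 2 → ℝ, ContinuousOn f (Set.Ici 0) → (∀ j, 0 ≤ f 0 j) →
    ∀ g m g' m', IsSkorokhod R f g m → IsSkorokhod R f g' m' →
      ∀ t ∈ Set.Ici (0:ℝ), g t = g' t ∧ m t = m' t

open Filter Topology Function

def PassesBack (φ ψ : ℝ → ℝ) : Prop :=
  ∀ r w, 0 ≤ r → 0 ≤ w → w < φ r → ∃ r' ∈ Icc 0 r, w < φ r' ∧ φ r' ≤ ψ r'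

theorem exists_nonpos_and_lt_sub {M M' h : ℝ → ℝ} (hM' : MonotoneOn M' (Ici 0))
    (hcont : ContinuousOn (fun t => M t - M' t) (Ici 0)) (h0 : M 0 = M' 0)
    (hconst : ∀ s t, 0 ≤ s → s ≤ t → (∀ r ∈ Icc s t, 0 < h r) → M s = M t)
    {r w : ℝ} (hr : 0 ≤ r) (hw : 0 ≤ w) (hwr : w < M r - M' r) :
    ∃ r' ∈ Icc 0 r, h r' ≤ 0 ∧ w < M r' - M' r' := by
  set φ := fun t => M t - M' t
  set S := Icc 0 r ∩ φ ⁻¹' Iic w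
  have hS : IsCompact S := isCompact_Icc.of_isClosed_subset
    ((hcont.mono Icc_subset_Ici_self).preimage_isClosed_of_isClosed isClosed_Icc isClosed_Iic)
    inter_subset_left
  set s₀ := sSup S
  obtain ⟨⟨hs₀, hs₀r⟩, hφs₀⟩ : s₀ ∈ S := hS.sSup_mem ⟨0, ⟨le_rfl, hr⟩, by simp [φ, h0, hw]⟩
  replace hs₀r : s₀ < r := hs₀r.lt_of_ne fun heq => (heq ▸ hφs₀ : φ r ≤ w).not_gt hwr
  -- were `h > 0` on `(s₀, r]`, `M` would be constant there, so `φ ≥ φ r > w` on it and at `s₀`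
  obtain ⟨r', ⟨hs₀r', hr'r⟩, hr'⟩ : ∃ r' ∈ Ioc s₀ r, h r' ≤ 0 := by
    by_contra! hpos
    have hle : ∀ s ∈ Ioo s₀ r, φ r ≤ φ s := fun s hs => by
      have hs0 : 0 ≤ s := hs₀.trans hs.1.le
      have hMs : M s = M r :=
        hconst s r hs0 hs.2.le fun q hq => hpos q ⟨hs.1.trans_le hq.1, hq.2⟩
      have := hM' hs0 (hs0.trans hs.2.le) hs.2.le
      simp only [φ]
      linarith
    have : φ r ≤ φ s₀ := ContinuousWithinAt.closure_le
      (by rw [closure_Ioo hs₀r.ne]; exact left_mem_Icc.2 hs₀r.le) continuousWithinAt_const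
      ((hcont s₀ hs₀).mono fun s hs => hs₀.trans hs.1.le) hle
    exact (this.trans hφs₀).not_gt hwr
  refine ⟨r', ⟨hs₀.trans hs₀r'.le, hr'r⟩, hr', ?_⟩
  by_contra! hle
  exact (le_csSup hS.bddAbove ⟨⟨hs₀.trans hs₀r'.le, hr'r⟩, hle⟩).not_gt hs₀r'

theorem exists_antitone_of_passesBack {φ : ℕ → ℝ → ℝ} (hstep : ∀ n, PassesBack (φ n) (φ (n + 1)))
    {c t : ℝ} (hc : 0 ≤ c) (ht : 0 ≤ t) (hct : c < φ 0 t) :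
    ∃ u : ℕ → ℝ, Antitone u ∧ (∀ n, 0 ≤ u n) ∧ ∀ n, c < φ n (u n) := by
  have next : ∀ n r, 0 ≤ r → c < φ n r → ∃ r', r' ≤ r ∧ 0 ≤ r' ∧ c < φ (n + 1) r' :=
    fun n r hr hcr => by
      obtain ⟨r', hr', hcr', hle⟩ := hstep n r c hr hc hcr
      exact ⟨r', hr'.2, hr'.1, hcr'.trans_le hle⟩
  choose! F hFle hF0 hFc using next
  let u : ℕ → ℝ := fun n => Nat.rec t F n
  have hu : ∀ n, 0 ≤ u n ∧ c < φ n (u n) := fun n => by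
    induction n with
    | zero => exact ⟨ht, hct⟩
    | succ n ih => exact ⟨hF0 n _ ih.1 ih.2, hFc n _ ih.1 ih.2⟩
  exact ⟨u, antitone_nat_of_succ_le fun n => hFle n _ (hu n).1 (hu n).2,
    fun n => (hu n).1, fun n => (hu n).2⟩

theorem Function.Antiperiodic.nonpos_of_passesBack {φ : ℕ → ℝ → ℝ} {p : ℕ}
    (hanti : Antiperiodic φ p) (hcont : ContinuousOn (φ 0) (Ici 0))
    (hstep : ∀ n, PassesBack (φ n) (φ (n + 1))) {t : ℝ} (ht : 0 ≤ t) : φ 0 t ≤ 0 := by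
  by_contra! hpos
  rcases Nat.eq_zero_or_pos p with rfl | hp
  · have := congrFun (hanti 0) t
    simp only [add_zero, Pi.neg_apply] at this
    linarith
  obtain ⟨u, hu, hu0, hφu⟩ :=
    exists_antitone_of_passesBack hstep (half_pos hpos).le ht (half_lt_self hpos)
  set L := ⨅ n, u n
  have hlim : Tendsto u atTop (𝓝 L) :=
    tendsto_atTop_ciInf hu ⟨0, by rintro _ ⟨n, rfl⟩; exact hu0 n⟩
  have hL : 0 ≤ L := le_ciInf hu0
  have hindex : ∀ k, Tendsto (fun j => j * (2 * p) + k) atTop atTop := fun k =>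
    tendsto_atTop_mono (fun j => le_add_right (Nat.le_mul_of_pos_right j (by positivity)))
      tendsto_id
  have hsub : ∀ k, Tendsto (fun j => φ 0 (u (j * (2 * p) + k))) atTop (𝓝 (φ 0 L)) := fun k =>
    (hcont L hL).tendsto.comp <|
      tendsto_nhdsWithin_iff.2 ⟨hlim.comp (hindex k), .of_forall fun j => hu0 _⟩
  have hperiod : ∀ j, φ (j * (2 * p)) = φ 0 := hanti.periodic_two_mul.nat_mul_eq
  have hup : φ 0 t / 2 ≤ φ 0 L := ge_of_tendsto' (hsub 0) fun j => by
    simpa [hperiod] using (hφu (j * (2 * p) + 0)).le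
  have hdown : φ 0 L ≤ -(φ 0 t / 2) := le_of_tendsto' (hsub p) fun j => by
    have := hφu (j * (2 * p) + p)
    rw [hanti, hperiod, Pi.neg_apply] at this
    linarith
  linarith

theorem Function.Antiperiodic.eq_zero_of_passesBack {φ : ℕ → ℝ → ℝ} {p : ℕ}
    (hanti : Antiperiodic φ p) (hcont : ∀ n, ContinuousOn (φ n) (Ici 0))
    (hstep : ∀ n, PassesBack (φ n) (φ (n + 1))) (n : ℕ) {t : ℝ} (ht : 0 ≤ t) : φ n t = 0 := by
  have hnonpos : ∀ k, φ k t ≤ 0 := fun k =>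
    (hanti.const_add k).nonpos_of_passesBack (hcont k)
      (fun j => by simpa only [add_assoc] using hstep (k + j)) ht
  have := hnonpos (n + p)
  rw [hanti, Pi.neg_apply] at this
  linarith [hnonpos n]

def rotSeq {X : Type*} [Neg X] (a b : X) : ℕ → X
  | 0 => a
  | 1 => b
  | n + 2 => -rotSeq a b n

theorem antiperiodic_rotSeq {X : Type*} [Neg X] (a b : X) : Antiperiodic (rotSeq a b) 2 :=
  fun _ => rfl

theorem continuousOn_rotSeq {X Y : Type*} [TopologicalSpace X] [TopologicalSpace Y] [Neg Y]
    [ContinuousNeg Y] {α β : X → Y} {s : Set X} (hα : ContinuousOn α s)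
    (hβ : ContinuousOn β s) : ∀ n, ContinuousOn (rotSeq α β n) s
  | 0 => hα
  | 1 => hβ
  | n + 2 => (continuousOn_rotSeq hα hβ n).neg

theorem passesBack_rotSeq {α β : ℝ → ℝ} (h₀ : PassesBack α β) (h₁ : PassesBack β (-α))
    (h₂ : PassesBack (-α) (-β)) (h₃ : PassesBack (-β) α) :
    ∀ n, PassesBack (rotSeq α β n) (rotSeq α β (n + 1))
  | 0 => h₀
  | 1 => h₁
  | 2 => h₂
  | 3 => by simpa [rotSeq] using h₃
  | n + 4 => by simpa [rotSeq] using passesBack_rotSeq h₀ h₁ h₂ h₃ n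

theorem mulVec_critical (v : Fin 2 → ℝ) : !![1, -1; 1, 1] *ᵥ v = ![v 0 - v 1, v 0 + v 1] := by
  ext i
  fin_cases i <;> simp [mulVec, dotProduct, Fin.sum_univ_two, sub_eq_add_neg]

namespace IsSkorokhod

variable {R : Matrix (Fin 2) (Fin 2) ℝ} {f g m gbar mbar : ℝ → Fin 2 → ℝ}

theorem continuousOn_apply (h : IsSkorokhod R f g m) (j : Fin 2) :
    ContinuousOn (fun t => m t j) (Ici 0) :=
  (continuous_apply j).comp_continuousOn h.2.1

theorem sub_eq_mulVec_sub (h : IsSkorokhod R f g m) (hbar : IsSkorokhod R f gbar mbar)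
    {t : ℝ} (ht : 0 ≤ t) : g t - gbar t = R *ᵥ (m t - mbar t) := by
  obtain ⟨-, -, -, -, -, hrel, -⟩ := h
  obtain ⟨-, -, -, -, -, hrelbar, -⟩ := hbar
  rw [hrel t ht, hrelbar t ht, mulVec_sub]
  abel

theorem exists_mulVec_sub_nonpos (h : IsSkorokhod R f g m) (hbar : IsSkorokhod R f gbar mbar)
    (j : Fin 2) {r w : ℝ} (hr : 0 ≤ r) (hw : 0 ≤ w) (hwr : w < m r j - mbar r j) :
    ∃ r' ∈ Icc 0 r, w < m r' j - mbar r' j ∧ (R *ᵥ (m r' - mbar r')) j ≤ 0 := by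
  have hcont := (h.continuousOn_apply j).sub (hbar.continuousOn_apply j)
  have hsub := fun t (ht : 0 ≤ t) => h.sub_eq_mulVec_sub hbar ht
  obtain ⟨-, -, -, hm0, -, -, hconst⟩ := h
  obtain ⟨-, -, hgbar, hmbar0, hmono, -, -⟩ := hbar
  obtain ⟨r', hr', hg, hlt⟩ :=
    exists_nonpos_and_lt_sub (hmono j) hcont (by rw [hm0, hmbar0]) (hconst j) hr hw hwr
  refine ⟨r', hr', hlt, ?_⟩
  rw [← hsub r' hr'.1, Pi.sub_apply]
  linarith [hgbar r' hr'.1 j]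

theorem passesBack_critical_zero (h : IsSkorokhod !![1, -1; 1, 1] f g m)
    (hbar : IsSkorokhod !![1, -1; 1, 1] f gbar mbar) :
    PassesBack (fun t => m t 0 - mbar t 0) (fun t => m t 1 - mbar t 1) := by
  intro r w hr hw hwr
  obtain ⟨r', hr', hlt, hR⟩ := h.exists_mulVec_sub_nonpos hbar 0 hr hw hwr
  simp only [mulVec_critical, Pi.sub_apply, cons_val_zero] at hR
  exact ⟨r', hr', hlt, by linarith⟩

theorem passesBack_critical_one (h : IsSkorokhod !![1, -1; 1, 1] f g m)
    (hbar : IsSkorokhod !![1, -1; 1, 1] f gbar mbar) :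
    PassesBack (fun t => m t 1 - mbar t 1) (fun t => -(m t 0 - mbar t 0)) := by
  intro r w hr hw hwr
  obtain ⟨r', hr', hlt, hR⟩ := h.exists_mulVec_sub_nonpos hbar 1 hr hw hwr
  simp only [mulVec_critical, Pi.sub_apply, cons_val_one, cons_val_zero] at hR
  exact ⟨r', hr', hlt, by linarith⟩

end IsSkorokhod

theorem uniqueness_critical_normalized
    (f g m gbar mbar : ℝ → Fin 2 → ℝ)
    (h : IsSkorokhod (!![1, -1; 1, 1]) f g m)
    (hbar : IsSkorokhod (!![1, -1; 1, 1]) f gbar mbar) :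
    ∀ t ∈ Set.Ici (0:ℝ), g t = gbar t ∧ m t = mbar t := by
  intro t ht
  set α : ℝ → ℝ := fun s => m s 0 - mbar s 0
  set β : ℝ → ℝ := fun s => m s 1 - mbar s 1
  have hcycle : ∀ n, PassesBack (rotSeq α β n) (rotSeq α β (n + 1)) :=
    passesBack_rotSeq (h.passesBack_critical_zero hbar) (h.passesBack_critical_one hbar)
      (by simpa [α, β, Pi.neg_def] using hbar.passesBack_critical_zero h)
      (by simpa [α, β, Pi.neg_def] using hbar.passesBack_critical_one h)
  have hzero : ∀ n, rotSeq α β n t = 0 := fun n =>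
    (antiperiodic_rotSeq α β).eq_zero_of_passesBack
      (continuousOn_rotSeq ((h.continuousOn_apply 0).sub (hbar.continuousOn_apply 0))
        ((h.continuousOn_apply 1).sub (hbar.continuousOn_apply 1))) hcycle n ht
  have hm : m t = mbar t := by
    ext j
    fin_cases j
    · exact sub_eq_zero.1 (hzero 0)
    · exact sub_eq_zero.1 (hzero 1)
  refine ⟨?_, hm⟩
  rw [← sub_eq_zero, h.sub_eq_mulVec_sub hbar ht, hm, sub_self, mulVec_zero]
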